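/- arXiv:1502.04186 — 6 statements merged into one kernel-verified Lean document; each statement's English description precedes it below -/
import Mathlib

section
/- For every ρ > 0, e^ρ E₁(ρ) < (ρ+1)/(ρ(ρ+2)). -/
/-!
`G x = e^{-x} (x + 1) / (x (x + 2))` satisfies
`-G' x = e^{-x} / x + 2 e^{-x} / (x (x + 2))^2 > e^{-x} / x` and `G → 0` at `∞`, so
`E₁ ρ = ∫_ρ^∞ e^{-t} / t dt < ∫_ρ^∞ -G' = G ρ`; multiplying by `e^ρ` gives the bound.
-/

open MeasureTheory Real Set Filter Topology

noncomputable def E1 (ρ : ℝ) : ℝ := ∫ t in Set.Ioi ρ, Real.exp (-t) / t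

theorem setIntegral_Ioi_lt_of_lt_neg_deriv {f g g' : ℝ → ℝ} {a l : ℝ}
    (hf : ContinuousOn f (Ioi a)) (hf_nonneg : ∀ x ∈ Ioi a, 0 ≤ f x)
    (hderiv : ∀ x ∈ Ici a, HasDerivAt g (g' x) x) (hlt : ∀ x ∈ Ioi a, f x < -g' x)
    (hg : Tendsto g atTop (𝓝 l)) :
    ∫ x in Ioi a, f x < g a - l := by
  have hg'_nonpos : ∀ x ∈ Ioi a, g' x ≤ 0 := fun x hx =>
    neg_nonneg.mp ((hf_nonneg x hx).trans (hlt x hx).le)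
  have hg'_int : IntegrableOn g' (Ioi a) := integrableOn_Ioi_deriv_of_nonpos' hderiv hg'_nonpos hg
  have hf_int : IntegrableOn f (Ioi a) := by
    refine hg'_int.neg.mono' (hf.aestronglyMeasurable measurableSet_Ioi) ?_
    filter_upwards [ae_restrict_mem measurableSet_Ioi] with x hx
    rw [Real.norm_of_nonneg (hf_nonneg x hx)]
    exact (hlt x hx).le
  have hneg_int : IntegrableOn (fun x => -g' x) (Ioi a) := hg'_int.neg
  have hgap : 0 < ∫ x in Ioi a, (-g' x - f x) := by
    refine (setIntegral_pos_iff_support_of_nonneg_ae (f := fun x => -g' x - f x) ?_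
      (hneg_int.sub hf_int)).2 ?_
    · filter_upwards [ae_restrict_mem measurableSet_Ioi] with x hx
      exact (sub_pos.mpr (hlt x hx)).le
    · refine ((isOpen_Ioi (a := a)).measure_pos volume nonempty_Ioi).trans_le (measure_mono ?_)
      exact fun x hx => ⟨(sub_pos.mpr (hlt x hx)).ne', hx⟩
  rw [integral_sub hneg_int hf_int, integral_neg,
    integral_Ioi_of_hasDerivAt_of_nonpos' hderiv hg'_nonpos hg] at hgap
  linarith

noncomputable def expIntegralMajorant (x : ℝ) : ℝ := exp (-x) * (x + 1) / (x * (x + 2))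

theorem hasDerivAt_expIntegralMajorant {t : ℝ} (ht : 0 < t) :
    HasDerivAt expIntegralMajorant
      (-(exp (-t) / t) - 2 * exp (-t) / (t * (t + 2)) ^ 2) t := by
  have hnum : HasDerivAt (fun x => exp (-x) * (x + 1)) (-exp (-t) * (t + 1) + exp (-t)) t :=
    ((hasDerivAt_neg t).exp.mul ((hasDerivAt_id t).add_const 1)).congr_deriv
      (by simp only [id]; ring)
  have hden : HasDerivAt (fun x => x * (x + 2)) (2 * t + 2) t :=
    ((hasDerivAt_id t).mul ((hasDerivAt_id t).add_const 2)).congr_deriv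
      (by simp only [id]; ring)
  refine (hnum.div hden (by positivity)).congr_deriv ?_
  field_simp
  ring

theorem tendsto_expIntegralMajorant_atTop : Tendsto expIntegralMajorant atTop (𝓝 0) := by
  refine squeeze_zero' ?_ ?_ (tendsto_exp_neg_atTop_nhds_zero)
  · filter_upwards [eventually_gt_atTop 0] with x hx
    unfold expIntegralMajorant
    positivity
  · filter_upwards [eventually_ge_atTop 1] with x hx
    unfold expIntegralMajorant
    rw [div_le_iff₀ (by positivity), mul_le_mul_iff_right₀ (exp_pos _)]
    nlinarith

theorem E1_lt_expIntegralMajorant {ρ : ℝ} (hρ : 0 < ρ) : E1 ρ < expIntegralMajorant ρ := by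
  have key := setIntegral_Ioi_lt_of_lt_neg_deriv (f := fun t => exp (-t) / t)
    (fun t ht => ((continuous_exp.comp continuous_neg).continuousAt.div continuousAt_id
      (hρ.trans ht).ne').continuousWithinAt)
    (fun t ht => (div_pos (exp_pos _) (hρ.trans ht)).le)
    (fun t ht => hasDerivAt_expIntegralMajorant (hρ.trans_le ht))
    (fun t ht => by
      have : 0 < 2 * exp (-t) / (t * (t + 2)) ^ 2 := by have := hρ.trans ht; positivity
      linarith)
    tendsto_expIntegralMajorant_atTop
  rwa [sub_zero] at key

theorem stmt_6 (ρ : ℝ) (hρ : 0 < ρ) :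
    Real.exp ρ * E1 ρ < (ρ + 1) / (ρ * (ρ + 2)) := by
  calc exp ρ * E1 ρ < exp ρ * expIntegralMajorant ρ :=
        mul_lt_mul_of_pos_left (E1_lt_expIntegralMajorant hρ) (exp_pos ρ)
    _ = (ρ + 1) / (ρ * (ρ + 2)) := by
        rw [expIntegralMajorant, exp_neg]
        field_simp
end

section
/- For every ρ > 0, the integral ∫₀^∞ (e^{-ρx}/(1+x)) (ρx − 2) x dx is strictly negative. -/
open MeasureTheory Real Set
open scoped Nat

/-!
Against the weight `x e^{-ρx}` on `(0, ∞)`, whose mean is `2/ρ` (a Gamma-function computation),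
the factor `ρx - 2` integrates to zero. Replacing `1/(1+x)` by its value `ρ/(ρ+2)` at the mean
therefore gives integral zero, and since `1/(1+x)` is decreasing it lies below that value exactly
where `ρx - 2` is positive: the difference of the integrands is
`e^{-ρx} x (ρx - 2)² / ((ρ + 2)(1 + x)) ≥ 0`, with strict inequality for `x > 2/ρ`.
-/

theorem integral_pow_mul_exp_neg_mul_Ioi {r : ℝ} (hr : 0 < r) (n : ℕ) :
    ∫ x in Ioi (0 : ℝ), x ^ n * exp (-r * x) = n ! / r ^ (n + 1) := by
  have h := integral_rpow_mul_exp_neg_mul_Ioi (a := n + 1) (by positivity) hr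
  rw [add_sub_cancel_right, Gamma_nat_eq_factorial, ← Nat.cast_succ, rpow_natCast,
    div_pow, one_pow, one_div_mul_eq_div] at h
  simpa only [rpow_natCast, neg_mul] using h

theorem integrableOn_pow_mul_exp_neg_mul_Ioi {r : ℝ} (hr : 0 < r) (n : ℕ) :
    IntegrableOn (fun x : ℝ => x ^ n * exp (-r * x)) (Ioi 0) :=
  Integrable.of_integral_ne_zero <| by
    rw [integral_pow_mul_exp_neg_mul_Ioi hr]; positivity

theorem setIntegral_Ioi_lt_setIntegral_Ioi {f g : ℝ → ℝ} {a b : ℝ} (hab : a ≤ b)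
    (hf : IntegrableOn f (Ioi a)) (hg : IntegrableOn g (Ioi a))
    (hle : ∀ x ∈ Ioi a, f x ≤ g x) (hlt : ∀ x ∈ Ioi b, f x < g x) :
    ∫ x in Ioi a, f x < ∫ x in Ioi a, g x := by
  rw [← sub_pos, ← integral_sub hg hf]
  have hnonneg : 0 ≤ᵐ[volume.restrict (Ioi a)] (g - f) :=
    (ae_restrict_iff' measurableSet_Ioi).2 <| .of_forall fun x hx => sub_nonneg.2 (hle x hx)
  rw [← Pi.sub_def, setIntegral_pos_iff_support_of_nonneg_ae hnonneg (hg.sub hf)]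
  have hsupp : Ioi b ⊆ Function.support (g - f) ∩ Ioi a := fun x hx =>
    ⟨(sub_pos.2 (hlt x hx)).ne', lt_of_le_of_lt hab hx⟩
  calc (0 : ENNReal) < volume (Ioi b) := by simp
    _ ≤ _ := measure_mono hsupp

theorem integral_exp_neg_mul_mul_sub_mul_Ioi {r : ℝ} (hr : 0 < r) :
    ∫ x in Ioi (0 : ℝ), exp (-r * x) * (r * x - 2) * x = 0 := by
  have hint := integrableOn_pow_mul_exp_neg_mul_Ioi hr
  calc ∫ x in Ioi (0 : ℝ), exp (-r * x) * (r * x - 2) * x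
      = ∫ x in Ioi (0 : ℝ), r * (x ^ 2 * exp (-r * x)) - 2 * (x ^ 1 * exp (-r * x)) := by
        congr 1; ext x; ring
    _ = 0 := by
        rw [integral_sub ((hint 2).const_mul r) ((hint 1).const_mul 2), integral_const_mul,
          integral_const_mul, integral_pow_mul_exp_neg_mul_Ioi hr,
          integral_pow_mul_exp_neg_mul_Ioi hr]
        field_simp
        ring

theorem integrableOn_exp_neg_mul_mul_sub_mul_Ioi {r : ℝ} (hr : 0 < r) :
    IntegrableOn (fun x : ℝ => exp (-r * x) * (r * x - 2) * x) (Ioi 0) := by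
  have hint := integrableOn_pow_mul_exp_neg_mul_Ioi hr
  refine IntegrableOn.congr_fun (((hint 2).const_mul r).sub ((hint 1).const_mul 2))
    (fun x _ => ?_) measurableSet_Ioi
  simp only [Pi.sub_apply]
  ring

theorem MeasureTheory.IntegrableOn.div_one_add_Ioi {f : ℝ → ℝ} (hf : IntegrableOn f (Ioi 0)) :
    IntegrableOn (fun x => f x / (1 + x)) (Ioi 0) := by
  have hbdd : ∀ᵐ x ∂volume.restrict (Ioi (0 : ℝ)), ‖(1 + x)⁻¹‖ ≤ 1 := by
    refine (ae_restrict_iff' measurableSet_Ioi).2 (.of_forall fun x (hx : 0 < x) => ?_)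
    rw [norm_inv, Real.norm_of_nonneg (by positivity)]
    exact inv_le_one_of_one_le₀ (by linarith)
  simp_rw [div_eq_inv_mul]
  have hmeas : Measurable fun x : ℝ => (1 + x)⁻¹ := by fun_prop
  exact hf.bdd_mul hmeas.aestronglyMeasurable hbdd

theorem stmt_7 (ρ : ℝ) (hρ : 0 < ρ) :
    ∫ x in Set.Ioi (0 : ℝ), Real.exp (-ρ * x) / (1 + x) * (ρ * x - 2) * x < 0 := by
  have hg := integrableOn_exp_neg_mul_mul_sub_mul_Ioi hρ
  have hf : IntegrableOn (fun x => exp (-ρ * x) / (1 + x) * (ρ * x - 2) * x) (Ioi 0) :=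
    hg.div_one_add_Ioi.congr_fun (fun x _ => by ring) measurableSet_Ioi
  have hgap : ∀ x : ℝ, 0 < x →
      ρ / (ρ + 2) * (exp (-ρ * x) * (ρ * x - 2) * x) - exp (-ρ * x) / (1 + x) * (ρ * x - 2) * x
        = exp (-ρ * x) * x * (ρ * x - 2) ^ 2 / ((ρ + 2) * (1 + x)) := fun x hx => by
    field_simp
    ring
  calc ∫ x in Ioi (0 : ℝ), exp (-ρ * x) / (1 + x) * (ρ * x - 2) * x
      < ∫ x in Ioi (0 : ℝ), ρ / (ρ + 2) * (exp (-ρ * x) * (ρ * x - 2) * x) := by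
        refine setIntegral_Ioi_lt_setIntegral_Ioi (b := 2 / ρ) (by positivity) hf
          (hg.const_mul _) (fun x hx => ?_) (fun x hx => ?_)
        · rw [← sub_nonneg, hgap x hx]
          have : (0 : ℝ) < x := hx
          positivity
        · have hx0 : 0 < x := lt_trans (by positivity) hx
          have : ρ * x - 2 ≠ 0 := by
            rw [mem_Ioi, div_lt_iff₀' hρ] at hx
            linarith
          rw [← sub_pos, hgap x hx0]
          positivity
    _ = 0 := by rw [integral_const_mul, integral_exp_neg_mul_mul_sub_mul_Ioi hρ, mul_zero]
end

section
/- Let ρ > 0 and let w : (0,∞) → ℝ be antitone with 0 < w(x) ≤ 1 for all x, such that x ↦ w(x) e^{-ρx}(ρx−2)x/(1+x) is integrable. Then ∫₀^∞ w(x) · (e^{-ρx}/(1+x)) (ρx − 2) x dx < 0. -/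
/-!
Since `(-x² e^{-ρx})' = (ρx - 2) x e^{-ρx}`, integrating by parts against `1 / (1 + x)` gives
`∫₀^∞ e^{-ρx} (ρx - 2) x / (1 + x) dx = -∫₀^∞ x² e^{-ρx} / (1 + x)² dx < 0`.
The integrand is `≤ 0` up to `2 / ρ` and `≥ 0` after it, so a nonincreasing weight `w` can only
decrease the integral relative to the constant weight `w (2 / ρ) > 0`.
-/

open MeasureTheory Real Set Filter Topology

theorem AntitoneOn.setIntegral_mul_le_mul_setIntegral_of_sign_change {α : Type*}
    [LinearOrder α] [MeasurableSpace α] {μ : Measure α} {s : Set α} {w f : α → ℝ} {c : α}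
    (hs : MeasurableSet s) (hw : AntitoneOn w s) (hc : c ∈ s)
    (hf_nonpos : ∀ x ∈ s, x ≤ c → f x ≤ 0) (hf_nonneg : ∀ x ∈ s, c < x → 0 ≤ f x)
    (hwf : IntegrableOn (fun x => w x * f x) s μ) (hf : IntegrableOn f s μ) :
    ∫ x in s, w x * f x ∂μ ≤ w c * ∫ x in s, f x ∂μ := by
  rw [← integral_const_mul]
  refine setIntegral_mono_on hwf (hf.const_mul _) hs fun x hx => ?_
  rcases le_or_gt x c with hxc | hcx
  · exact mul_le_mul_of_nonpos_right (hw hx hc hxc) (hf_nonpos x hx hxc)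
  · exact mul_le_mul_of_nonneg_right (hw hc hx hcx.le) (hf_nonneg x hx hcx)

theorem integrableOn_mul_exp_neg_mul_Ioi {b : ℝ} (hb : 0 < b) :
    IntegrableOn (fun x : ℝ => x * exp (-b * x)) (Ioi 0) := by
  simpa only [rpow_one] using
    integrableOn_rpow_mul_exp_neg_mul_rpow (s := 1) (p := 1) (by norm_num) one_pos hb

theorem integrableOn_Ioi_of_abs_le_exp_neg_mul_affine {f : ℝ → ℝ} {a b c : ℝ} (hb : 0 < b)
    (hf : ContinuousOn f (Ioi 0)) (hle : ∀ x > 0, |f x| ≤ exp (-b * x) * (a * x + c)) :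
    IntegrableOn f (Ioi 0) := by
  have hdom : IntegrableOn (fun x => a * (x * exp (-b * x)) + c * exp (-b * x)) (Ioi 0) :=
    ((integrableOn_mul_exp_neg_mul_Ioi hb).const_mul a).add
      ((exp_neg_integrableOn_Ioi 0 hb).const_mul c)
  refine hdom.mono' (hf.aestronglyMeasurable measurableSet_Ioi) ?_
  filter_upwards [self_mem_ae_restrict measurableSet_Ioi] with x hx
  rw [norm_eq_abs]
  linarith [hle x hx]

noncomputable def crossingIntegrand (ρ x : ℝ) : ℝ :=
  exp (-ρ * x) / (1 + x) * (ρ * x - 2) * x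

section crossingIntegrand

variable {ρ x : ℝ}

theorem crossingIntegrand_nonpos (hρ : 0 < ρ) (hx : 0 < x) (hxc : x ≤ 2 / ρ) :
    crossingIntegrand ρ x ≤ 0 := by
  have hlin : ρ * x - 2 ≤ 0 := by rw [le_div_iff₀ hρ] at hxc; linarith
  unfold crossingIntegrand
  exact mul_nonpos_of_nonpos_of_nonneg
    (mul_nonpos_of_nonneg_of_nonpos (by positivity) hlin) hx.le

theorem crossingIntegrand_nonneg (hρ : 0 < ρ) (hx : 2 / ρ < x) :
    0 ≤ crossingIntegrand ρ x := by
  have hlin : 0 ≤ ρ * x - 2 := by rw [div_lt_iff₀ hρ] at hx; linarith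
  have hx0 : 0 < x := (div_pos two_pos hρ).trans hx
  unfold crossingIntegrand
  positivity

theorem abs_crossingIntegrand_le (hρ : 0 < ρ) (hx : 0 < x) :
    |crossingIntegrand ρ x| ≤ exp (-ρ * x) * (ρ * x + 2) := by
  have hx1 : x / (1 + x) ≤ 1 := by rw [div_le_one (by linarith)]; linarith
  have habs : |ρ * x - 2| ≤ ρ * x + 2 := abs_le.2 ⟨by nlinarith, by nlinarith⟩
  calc |crossingIntegrand ρ x| = exp (-ρ * x) * |ρ * x - 2| * (x / (1 + x)) := by
        rw [crossingIntegrand, abs_mul, abs_mul, abs_div, abs_of_pos (exp_pos _),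
          abs_of_pos hx, abs_of_pos (by linarith : 0 < 1 + x)]
        ring
    _ ≤ exp (-ρ * x) * (ρ * x + 2) * 1 := by gcongr
    _ = exp (-ρ * x) * (ρ * x + 2) := mul_one _

theorem hasDerivAt_crossingIntegrand_primitive (hx : 1 + x ≠ 0) :
    HasDerivAt (fun y => -(y ^ 2 * exp (-ρ * y)) / (1 + y))
      (crossingIntegrand ρ x + x ^ 2 * exp (-ρ * x) / (1 + x) ^ 2) x := by
  have hexp : HasDerivAt (fun y => exp (-ρ * y)) (exp (-ρ * x) * -ρ) x := by
    simpa using ((hasDerivAt_id x).const_mul (-ρ)).exp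
  have hnum : HasDerivAt (fun y => -(y ^ 2 * exp (-ρ * y)))
      (-(2 * x * exp (-ρ * x) + x ^ 2 * (exp (-ρ * x) * -ρ))) x := by
    simpa using ((hasDerivAt_pow 2 x).fun_mul hexp).fun_neg
  have hden : HasDerivAt (fun y : ℝ => 1 + y) 1 x := (hasDerivAt_id x).const_add 1
  refine (hnum.div hden hx).congr_deriv ?_
  rw [crossingIntegrand]
  field_simp
  ring

theorem tendsto_crossingIntegrand_primitive_atTop (hρ : 0 < ρ) :
    Tendsto (fun y => -(y ^ 2 * exp (-ρ * y)) / (1 + y)) atTop (𝓝 0) := by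
  have hlim : Tendsto (fun y => y * exp (-ρ * y)) atTop (𝓝 0) := by
    simpa only [rpow_one] using tendsto_rpow_mul_exp_neg_mul_atTop_nhds_zero 1 ρ hρ
  refine squeeze_zero_norm' ?_ hlim
  filter_upwards [eventually_gt_atTop 0] with y hy
  rw [norm_eq_abs, abs_div, abs_neg, abs_of_pos (by positivity), abs_of_pos (by linarith),
    div_le_iff₀ (by linarith)]
  nlinarith [mul_pos hy (exp_pos (-ρ * y))]

theorem integrableOn_crossingIntegrand (hρ : 0 < ρ) :
    IntegrableOn (crossingIntegrand ρ) (Ioi 0) := by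
  refine integrableOn_Ioi_of_abs_le_exp_neg_mul_affine hρ ?_ fun x hx =>
    abs_crossingIntegrand_le hρ hx
  refine ContinuousOn.mul (ContinuousOn.mul ?_ (by fun_prop)) (by fun_prop)
  exact (by fun_prop : Continuous fun x => exp (-ρ * x)).continuousOn.div (by fun_prop)
    fun x (hx : 0 < x) => by positivity

theorem integrableOn_sq_mul_exp_neg_mul_div_one_add_sq (hρ : 0 < ρ) :
    IntegrableOn (fun x => x ^ 2 * exp (-ρ * x) / (1 + x) ^ 2) (Ioi 0) := by
  refine integrableOn_Ioi_of_abs_le_exp_neg_mul_affine (a := 0) (c := 1) hρ ?_ fun x hx => ?_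
  · exact (by fun_prop : Continuous fun x => x ^ 2 * exp (-ρ * x)).continuousOn.div
      (by fun_prop) fun x (hx : 0 < x) => by positivity
  · rw [abs_of_nonneg (by positivity), div_le_iff₀ (by positivity)]
    nlinarith [exp_pos (-ρ * x)]

theorem integral_crossingIntegrand (hρ : 0 < ρ) :
    ∫ x in Ioi 0, crossingIntegrand ρ x =
      -∫ x in Ioi 0, x ^ 2 * exp (-ρ * x) / (1 + x) ^ 2 := by
  rw [eq_neg_iff_add_eq_zero, ← integral_add (integrableOn_crossingIntegrand hρ)
    (integrableOn_sq_mul_exp_neg_mul_div_one_add_sq hρ), integral_Ioi_of_hasDerivAt_of_tendsto'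
    (fun x (hx : 0 ≤ x) => hasDerivAt_crossingIntegrand_primitive (ρ := ρ) (by positivity))
    ((integrableOn_crossingIntegrand hρ).add (integrableOn_sq_mul_exp_neg_mul_div_one_add_sq hρ))
    (tendsto_crossingIntegrand_primitive_atTop hρ)]
  simp

theorem integral_crossingIntegrand_neg (hρ : 0 < ρ) :
    ∫ x in Ioi 0, crossingIntegrand ρ x < 0 := by
  rw [integral_crossingIntegrand hρ, neg_neg_iff_pos, setIntegral_pos_iff_support_of_nonneg_ae
    (ae_restrict_of_forall_mem measurableSet_Ioi fun x _ => by positivity)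
    (integrableOn_sq_mul_exp_neg_mul_div_one_add_sq hρ)]
  have hsupp : Ioi (0 : ℝ) ⊆
      Function.support (fun x => x ^ 2 * exp (-ρ * x) / (1 + x) ^ 2) ∩ Ioi 0 :=
    fun x (hx : 0 < x) => ⟨(by positivity : (0 : ℝ) < _).ne', hx⟩
  exact (by simp : 0 < volume (Ioi (0 : ℝ))).trans_le (measure_mono hsupp)

end crossingIntegrand

theorem stmt_9_general (ρ : ℝ) (hρ : 0 < ρ) (w : ℝ → ℝ)
    (hw : AntitoneOn w (Set.Ioi 0))
    (hwpos : ∀ x ∈ Set.Ioi (0 : ℝ), 0 < w x)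
    (hint : IntegrableOn
      (fun x => w x * (Real.exp (-ρ * x) * (ρ * x - 2) * x / (1 + x))) (Set.Ioi 0)) :
    ∫ x in Set.Ioi (0 : ℝ), w x * (Real.exp (-ρ * x) / (1 + x) * (ρ * x - 2) * x) < 0 := by
  have hc : 2 / ρ ∈ Ioi (0 : ℝ) := div_pos two_pos hρ
  have hwf : IntegrableOn (fun x => w x * crossingIntegrand ρ x) (Ioi 0) :=
    hint.congr_fun (fun x _ => by rw [crossingIntegrand]; ring) measurableSet_Ioi
  calc ∫ x in Ioi 0, w x * crossingIntegrand ρ x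
      ≤ w (2 / ρ) * ∫ x in Ioi 0, crossingIntegrand ρ x :=
        hw.setIntegral_mul_le_mul_setIntegral_of_sign_change measurableSet_Ioi hc
          (fun x hx hxc => crossingIntegrand_nonpos hρ hx hxc)
          (fun x _ hcx => crossingIntegrand_nonneg hρ hcx) hwf (integrableOn_crossingIntegrand hρ)
    _ < 0 := mul_neg_of_pos_of_neg (hwpos _ hc) (integral_crossingIntegrand_neg hρ)

theorem stmt_9 (ρ : ℝ) (hρ : 0 < ρ) (w : ℝ → ℝ)
    (hw : AntitoneOn w (Set.Ioi 0))
    (hwpos : ∀ x ∈ Set.Ioi (0 : ℝ), 0 < w x)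
    (hwle : ∀ x ∈ Set.Ioi (0 : ℝ), w x ≤ 1)
    (hint : IntegrableOn
      (fun x => w x * (Real.exp (-ρ * x) * (ρ * x - 2) * x / (1 + x))) (Set.Ioi 0)) :
    ∫ x in Set.Ioi (0 : ℝ), w x * (Real.exp (-ρ * x) / (1 + x) * (ρ * x - 2) * x) < 0 :=
  stmt_9_general ρ hρ w hw hwpos hint
end

section
/- Fix η > 0 and define g : (0,∞) → ℝ by g(β) = β · ∫₀^∞ e^{-βγ/η}/(1+γ) dγ. Then g is strictly concave on (0,∞). -/
open MeasureTheory Real Set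

private noncomputable def F (η β u : ℝ) : ℝ := Real.exp (-u / η) * (β / (β + u))

private lemma F_int (η : ℝ) (hη : 0 < η) {β : ℝ} (hβ : 0 < β) :
    IntegrableOn (F η β) (Ioi 0) := by
  have hbase : IntegrableOn (fun u : ℝ => Real.exp (-(1/η) * u)) (Ioi 0) :=
    exp_neg_integrableOn_Ioi 0 (by positivity)
  refine Integrable.mono hbase ?_ ?_
  · apply Measurable.aestronglyMeasurable
    unfold F
    fun_prop
  · filter_upwards [ae_restrict_mem measurableSet_Ioi] with u hu
    have hu0 : (0:ℝ) < u := hu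
    have h1 : 0 ≤ β / (β + u) := by positivity
    have h2 : β / (β + u) ≤ 1 := by
      rw [div_le_one (by positivity)]; linarith
    have h3 : ‖F η β u‖ = Real.exp (-u / η) * (β / (β + u)) := by
      unfold F
      rw [Real.norm_eq_abs, abs_of_nonneg (mul_nonneg (Real.exp_pos _).le h1)]
    rw [h3, Real.norm_eq_abs, abs_of_nonneg (Real.exp_pos _).le,
      show -(1/η) * u = -u / η by ring]
    nlinarith [Real.exp_pos (-u/η)]

private lemma key (η : ℝ) (hη : 0 < η) {β : ℝ} (hβ : 0 < β) :
    β * ∫ γ in Ioi (0:ℝ), Real.exp (-β * γ / η) / (1 + γ) = ∫ u in Ioi (0:ℝ), F η β u := by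
  have h1 : ∫ γ in Ioi (0:ℝ), Real.exp (-β * γ / η) / (1 + γ)
      = ∫ γ in Ioi (0:ℝ), F η β (β * γ) := by
    refine setIntegral_congr_fun measurableSet_Ioi (fun γ hγ => ?_)
    have hγ0 : (0:ℝ) < γ := hγ
    unfold F
    rw [show β + β * γ = β * (1 + γ) by ring,
      show -β * γ / η = -(β * γ) / η by ring]
    have hb2 : β / (β * (1 + γ)) = 1 / (1 + γ) := by
      rw [eq_div_iff (by positivity)]
      field_simp
    rw [hb2, mul_one_div]
  rw [h1, integral_comp_mul_left_Ioi (F η β) 0 hβ, mul_zero, smul_eq_mul,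
    ← mul_assoc, mul_inv_cancel₀ hβ.ne', one_mul]

private lemma frac_concave {u x y a b : ℝ} (hu : 0 < u) (hx : 0 < x) (hy : 0 < y)
    (hxy : x ≠ y) (ha : 0 < a) (hb : 0 < b) (hab : a + b = 1) :
    a * (x / (x + u)) + b * (y / (y + u)) < (a * x + b * y) / (a * x + b * y + u) := by
  have h1 : 0 < x + u := by linarith
  have h2 : 0 < y + u := by linarith
  have h3 : 0 < a * x + b * y + u := by nlinarith
  rw [show a * (x / (x + u)) = (a*x)/(x+u) by ring,
    show b * (y / (y + u)) = (b*y)/(y+u) by ring,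
    div_add_div _ _ h1.ne' h2.ne', div_lt_div_iff₀ (by positivity) h3]
  have hsq : 0 < (x - y)^2 :=
    lt_of_le_of_ne (sq_nonneg _) (Ne.symm (pow_ne_zero 2 (sub_ne_zero.mpr hxy)))
  have hb' : b = 1 - a := by linarith
  subst hb'
  nlinarith [mul_pos (mul_pos (mul_pos ha hb) hu) hsq]

theorem stmt_10 (η : ℝ) (hη : 0 < η) :
    StrictConcaveOn ℝ (Set.Ioi 0)
      (fun β : ℝ => β * ∫ γ in Set.Ioi (0 : ℝ), Real.exp (-β * γ / η) / (1 + γ)) := by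
  refine ⟨convex_Ioi 0, fun x hx y hy hxy a b ha hb hab => ?_⟩
  have hx0 : (0:ℝ) < x := hx
  have hy0 : (0:ℝ) < y := hy
  have hm : 0 < a * x + b * y := by positivity
  simp only [smul_eq_mul]
  rw [key η hη hx0, key η hη hy0, key η hη hm]
  have hix := F_int η hη hx0
  have hiy := F_int η hη hy0
  have him := F_int η hη hm
  have hadd : IntegrableOn (fun u => a * F η x u + b * F η y u) (Ioi 0) :=
    (hix.const_mul a).add (hiy.const_mul b)
  have hsub : ∫ u in Ioi (0:ℝ), (F η (a*x+b*y) u - (a * F η x u + b * F η y u))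
      = (∫ u in Ioi (0:ℝ), F η (a*x+b*y) u)
        - (a * (∫ u in Ioi (0:ℝ), F η x u) + b * (∫ u in Ioi (0:ℝ), F η y u)) := by
    rw [integral_sub him hadd, integral_add (hix.const_mul a) (hiy.const_mul b),
      integral_const_mul, integral_const_mul]
  have hpos : 0 < ∫ u in Ioi (0:ℝ), (F η (a*x+b*y) u - (a * F η x u + b * F η y u)) := by
    set G := fun u : ℝ => F η (a*x+b*y) u - (a * F η x u + b * F η y u) with hG
    have hGpos : ∀ u ∈ Ioi (0:ℝ), 0 < G u := by
      intro u hu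
      have hu0 : (0:ℝ) < u := hu
      have hfc := frac_concave hu0 hx0 hy0 hxy ha hb hab
      have he : 0 < Real.exp (-u / η) := Real.exp_pos _
      simp only [hG, F]
      nlinarith
    have hGi : IntegrableOn G (Ioi 0) := him.sub hadd
    rw [setIntegral_pos_iff_support_of_nonneg_ae ?_ hGi]
    · refine lt_of_lt_of_le ?_ (measure_mono (fun u hu => ⟨(hGpos u hu).ne', hu⟩))
      simp [Real.volume_Ioi]
    · filter_upwards [ae_restrict_mem measurableSet_Ioi] with u hu
      exact (hGpos u hu).le
  rw [hsub] at hpos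
  linarith
end

section
/- Fix η > 0 and let w : (0,∞) → ℝ be antitone with 0 < w(γ) ≤ 1 for all γ, such that γ ↦ w(γ)/(1+γ) is integrable on (0,∞). Then the function g(β) = β · ∫₀^∞ w(γ) e^{-βγ/η}/(1+γ) dγ is strictly concave on (0,∞). -/
open MeasureTheory Real Set

/-!
Write `K β γ = β e^{-βγ/η} / (1 + γ)`. For a chord point `m = a x + b y` the gap
`K m γ - (a K x γ + b K y γ)` equals `e^{-mγ/η} / (1 + γ)` times
`m - a x e^{(m-x)γ/η} - b y e^{(m-y)γ/η}`, a concave function of `γ` vanishing at `0`; so the gap is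
nonnegative up to some `γ₀` and nonpositive after it. As `w` is antitone this gives
`∫ w · gap ≥ w γ₀ · ∫ gap`, and the unweighted `∫ gap` is positive: the substitution
`γ = η t / β` turns `∫ K β γ dγ` into `∫ η e^{-t} β / (β + η t) dt`, an integral of strictly
concave functions of `β`.
-/

def CrossesDownAt (s : Set ℝ) (f : ℝ → ℝ) (x₀ : ℝ) : Prop :=
  (∀ x ∈ s, x ≤ x₀ → 0 ≤ f x) ∧ ∀ x ∈ s, x₀ ≤ x → f x ≤ 0

lemma integral_sub_chord {α : Type*} [MeasurableSpace α] {μ : Measure α} {f g h : α → ℝ}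
    (a b : ℝ) (hf : Integrable f μ) (hg : Integrable g μ) (hh : Integrable h μ) :
    ∫ t, h t - (a * f t + b * g t) ∂μ = ∫ t, h t ∂μ - (a * ∫ t, f t ∂μ + b * ∫ t, g t ∂μ) := by
  have hfg : Integrable (fun t => a * f t + b * g t) μ := (hf.const_mul a).add (hg.const_mul b)
  rw [integral_sub hh hfg, integral_add (hf.const_mul a) (hg.const_mul b), integral_const_mul,
    integral_const_mul]

theorem StrictConcaveOn.integral {α E : Type*} [MeasurableSpace α] [AddCommGroup E] [Module ℝ E]
    {μ : Measure α} (hμ : μ ≠ 0) {s : Set E} (hs : Convex ℝ s) {f : α → E → ℝ}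
    (hf : ∀ᵐ t ∂μ, StrictConcaveOn ℝ s (f t)) (hint : ∀ x ∈ s, Integrable (fun t => f t x) μ) :
    StrictConcaveOn ℝ s fun x => ∫ t, f t x ∂μ := by
  refine ⟨hs, fun x hx y hy hxy a b ha hb hab => ?_⟩
  have hgap : ∀ᵐ t ∂μ, 0 < f t (a • x + b • y) - (a * f t x + b * f t y) := by
    filter_upwards [hf] with t ht
    exact sub_pos.2 (ht.2 hx hy hxy ha hb hab)
  have hsupp :
      0 < μ (Function.support fun t => f t (a • x + b • y) - (a * f t x + b * f t y)) := by
    refine pos_iff_ne_zero.2 fun h0 => hμ (ae_eq_bot.1 (Filter.eventually_false_iff_eq_bot.1 ?_))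
    filter_upwards [hgap, measure_eq_zero_iff_ae_notMem.1 h0] with t hpos hzero
    exact hzero (Function.mem_support.2 hpos.ne')
  have hm := hint _ (hs hx hy ha.le hb.le hab)
  have := (integral_pos_iff_support_of_nonneg_ae (hgap.mono fun t ht => ht.le)
    (hm.sub (((hint x hx).const_mul a).add ((hint y hy).const_mul b)))).2 hsupp
  rw [integral_sub_chord a b (hint x hx) (hint y hy) hm] at this
  simp only [smul_eq_mul]
  linarith

lemma mul_setIntegral_le_setIntegral_mul_of_antitoneOn {s : Set ℝ} (hs : MeasurableSet s)
    {w f : ℝ → ℝ} {x₀ : ℝ} (hx₀ : x₀ ∈ s) (hw : AntitoneOn w s) (hf_sign : CrossesDownAt s f x₀)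
    (hf : IntegrableOn f s) (hwf : IntegrableOn (fun x => w x * f x) s) :
    w x₀ * ∫ x in s, f x ≤ ∫ x in s, w x * f x := by
  rw [← sub_nonneg, ← integral_const_mul, ← integral_sub hwf (hf.const_mul _)]
  refine setIntegral_nonneg hs fun x hx => ?_
  rw [← sub_mul]
  rcases le_total x x₀ with hxx₀ | hx₀x
  · exact mul_nonneg (sub_nonneg.2 (hw hx hx₀ hxx₀)) (hf_sign.1 x hx hxx₀)
  · exact mul_nonneg_of_nonpos_of_nonpos (sub_nonpos.2 (hw hx₀ hx hx₀x)) (hf_sign.2 x hx hx₀x)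

theorem StrictConcaveOn.setIntegral_mul_of_antitoneOn {K : ℝ → ℝ → ℝ} {w : ℝ → ℝ} {s t : Set ℝ}
    (hK : StrictConcaveOn ℝ t fun β => ∫ γ in s, K β γ) (hs : MeasurableSet s)
    (hK_int : ∀ β ∈ t, IntegrableOn (K β) s)
    (hwK_int : ∀ β ∈ t, IntegrableOn (fun γ => w γ * K β γ) s)
    (hw : AntitoneOn w s) (hw_pos : ∀ γ ∈ s, 0 < w γ)
    (hcross : ∀ x ∈ t, ∀ y ∈ t, x < y → ∀ a b : ℝ, 0 < a → 0 < b → a + b = 1 →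
      (∃ γ ∈ s, 0 < K (a * x + b * y) γ - (a * K x γ + b * K y γ)) →
      ∃ γ₀ ∈ s, CrossesDownAt s (fun γ => K (a * x + b * y) γ - (a * K x γ + b * K y γ)) γ₀) :
    StrictConcaveOn ℝ t fun β => ∫ γ in s, w γ * K β γ := by
  refine LinearOrder.strictConcaveOn_of_lt hK.1 fun x hx y hy hxy a b ha hb hab => ?_
  simp only [smul_eq_mul]
  have hm : a * x + b * y ∈ t := hK.1 hx hy ha.le hb.le hab
  have hgap_int : IntegrableOn (fun γ => K (a * x + b * y) γ - (a * K x γ + b * K y γ)) s :=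
    (hK_int _ hm).sub (((hK_int x hx).const_mul a).add ((hK_int y hy).const_mul b))
  have hwgap_int :
      IntegrableOn (fun γ => w γ * (K (a * x + b * y) γ - (a * K x γ + b * K y γ))) s :=
    ((hwK_int _ hm).sub (((hwK_int x hx).const_mul a).add ((hwK_int y hy).const_mul b))).congr_fun
      (fun γ _ => by simp only [Pi.sub_apply, Pi.add_apply]; ring) hs
  have hgap_pos : 0 < ∫ γ in s, K (a * x + b * y) γ - (a * K x γ + b * K y γ) := by
    rw [integral_sub_chord a b (hK_int x hx) (hK_int y hy) (hK_int _ hm), sub_pos]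
    simpa only [smul_eq_mul] using hK.2 hx hy hxy.ne ha hb hab
  obtain ⟨γ₀, hγ₀, hsign⟩ := hcross x hx y hy hxy a b ha hb hab <| by
    by_contra! h
    exact (setIntegral_nonpos hs h).not_gt hgap_pos
  have hwgap_pos : 0 < ∫ γ in s, w γ * (K (a * x + b * y) γ - (a * K x γ + b * K y γ)) :=
    (mul_pos (hw_pos γ₀ hγ₀) hgap_pos).trans_le
      (mul_setIntegral_le_setIntegral_mul_of_antitoneOn hs hγ₀ hw hsign hgap_int hwgap_int)
  have hlin : ∫ γ in s, w γ * (K (a * x + b * y) γ - (a * K x γ + b * K y γ)) =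
      (∫ γ in s, w γ * K (a * x + b * y) γ) -
        (a * (∫ γ in s, w γ * K x γ) + b * ∫ γ in s, w γ * K y γ) := by
    rw [← integral_sub_chord a b (hwK_int x hx) (hwK_int y hy) (hwK_int _ hm)]
    exact setIntegral_congr_fun hs fun γ _ => by ring
  linarith

lemma ConcaveOn.div_le_div_of_map_zero {φ : ℝ → ℝ} (hφ : ConcaveOn ℝ (Ici 0) φ) (h0 : φ 0 = 0)
    {u v : ℝ} (hu : 0 < u) (huv : u ≤ v) : φ v / v ≤ φ u / u := by
  have := hφ.neg.secant_mono (a := 0) self_mem_Ici hu.le (hu.le.trans huv) hu.ne'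
    (hu.trans_le huv).ne' huv
  simpa [h0, neg_div] using this

lemma ConcaveOn.exists_crossesDownAt {φ : ℝ → ℝ} (hφ : ConcaveOn ℝ (Ici 0) φ)
    (hcont : ContinuousOn φ (Ici 0)) (h0 : φ 0 = 0) {x y : ℝ} (hx : 0 < x) (hφx : 0 < φ x)
    (hy : 0 < y) (hφy : φ y < 0) :
    ∃ z ∈ Ioi 0, CrossesDownAt (Ioi 0) φ z := by
  have hxy : x ≤ y := by
    by_contra! hyx
    linarith [hφ.div_le_div_of_map_zero h0 hy hyx.le, div_pos hφx hx, div_neg_of_neg_of_pos hφy hy]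
  obtain ⟨z, ⟨hxz, -⟩, hφz⟩ := intermediate_value_Icc' hxy
    (hcont.mono ((Icc_subset_Ici_iff hxy).2 hx.le)) ⟨hφy.le, hφx.le⟩
  have hz : 0 < z := hx.trans_le hxz
  refine ⟨z, hz, fun u (hu : 0 < u) huz => ?_, fun u _ hzu => ?_⟩
  · have := hφ.div_le_div_of_map_zero h0 hu huz
    rw [hφz, zero_div] at this
    simpa using (le_div_iff₀ hu).1 this
  · have := hφ.div_le_div_of_map_zero h0 hz hzu
    rw [hφz, zero_div] at this
    simpa using (div_le_iff₀ (hz.trans_le hzu)).1 this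

lemma strictConcaveOn_const_mul_div_add {c s : ℝ} (hc : 0 < c) (hs : 0 < s) :
    StrictConcaveOn ℝ (Ioi (-s)) fun x => c * (x / (x + s)) := by
  refine ⟨convex_Ioi _, fun x hx y hy hxy a b ha hb hab => ?_⟩
  simp only [smul_eq_mul]
  have hx' : 0 < x + s := neg_lt_iff_pos_add.1 hx
  have hy' : 0 < y + s := neg_lt_iff_pos_add.1 hy
  have hm : 0 < a * x + b * y + s := by nlinarith
  have hsq : 0 < (x - y) ^ 2 := by positivity [sub_ne_zero.2 hxy]
  have hgap : c * ((a * x + b * y) / (a * x + b * y + s)) -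
      (a * (c * (x / (x + s))) + b * (c * (y / (y + s)))) =
        c * a * b * s * (x - y) ^ 2 / ((x + s) * (y + s) * (a * x + b * y + s)) := by
    field_simp
    linear_combination (-((a * x + b * y) * x * y + s * (a * x ^ 2 + b * y ^ 2))) * hab
  rw [← sub_pos, hgap]
  positivity

noncomputable def betaKernel (η β γ : ℝ) : ℝ := β * exp (-β * γ / η) / (1 + γ)

variable {η β : ℝ}

lemma integrableOn_betaKernel (hη : 0 < η) (hβ : 0 < β) :
    IntegrableOn (betaKernel η β) (Ioi 0) := by
  have hexp : IntegrableOn (fun γ => β * exp (-(β / η) * γ)) (Ioi 0) :=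
    (exp_neg_integrableOn_Ioi 0 (div_pos hβ hη)).const_mul β
  refine IntegrableOn.congr_fun (hexp.mul_bdd (c := 1)
    (by fun_prop : Measurable fun γ : ℝ => (1 + γ)⁻¹).aestronglyMeasurable ?_) (fun γ _ => ?_)
    measurableSet_Ioi
  · filter_upwards [ae_restrict_mem measurableSet_Ioi] with γ (hγ : 0 < γ)
    rw [norm_inv, Real.norm_of_nonneg (by linarith)]
    exact inv_le_one_of_one_le₀ (by linarith)
  · rw [betaKernel, show -β * γ / η = -(β / η) * γ by ring]
    ring

lemma integrableOn_mul_betaKernel {w : ℝ → ℝ} (hη : 0 < η) (hβ : 0 < β)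
    (hint : IntegrableOn (fun γ => w γ / (1 + γ)) (Ioi 0)) :
    IntegrableOn (fun γ => w γ * betaKernel η β γ) (Ioi 0) := by
  refine IntegrableOn.congr_fun (hint.bdd_mul (c := β) (f := fun γ => β * exp (-β * γ / η))
    (by fun_prop) ?_) (fun γ _ => ?_) measurableSet_Ioi
  · filter_upwards [ae_restrict_mem measurableSet_Ioi] with γ (hγ : 0 < γ)
    rw [Real.norm_of_nonneg (by positivity)]
    refine mul_le_of_le_one_right hβ.le (exp_le_one_iff.2 ?_)
    rw [neg_mul, neg_div, neg_nonpos]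
    positivity
  · simp only [betaKernel]; ring

lemma integral_betaKernel_eq (hη : 0 < η) (hβ : 0 < β) :
    ∫ γ in Ioi 0, betaKernel η β γ = ∫ t in Ioi 0, η * exp (-t) * (β / (β + η * t)) := by
  have hβη : 0 < β / η := div_pos hβ hη
  have h := integral_comp_mul_left_Ioi' (fun t => η * exp (-t) * (β / (β + η * t))) 0 hβη
  rw [mul_zero] at h
  rw [← h, smul_eq_mul, ← integral_const_mul]
  refine setIntegral_congr_fun measurableSet_Ioi fun γ (hγ : 0 < γ) => ?_
  have : 0 < 1 + γ := by linarith
  simp only [betaKernel]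
  field_simp

lemma integrableOn_exp_neg_mul_div_add (hη : 0 < η) (hβ : 0 < β) :
    IntegrableOn (fun t => η * exp (-t) * (β / (β + η * t))) (Ioi 0) := by
  refine (((integrableOn_exp_neg_Ioi 0).const_mul η).mul_bdd (c := 1)
    (by fun_prop : Measurable fun t : ℝ => β / (β + η * t)).aestronglyMeasurable ?_)
  filter_upwards [ae_restrict_mem measurableSet_Ioi] with t (ht : 0 < t)
  rw [Real.norm_of_nonneg (by positivity)]
  exact div_le_one_of_le₀ (by nlinarith) (by positivity)

lemma strictConcaveOn_integral_betaKernel (hη : 0 < η) :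
    StrictConcaveOn ℝ (Ioi 0) fun β => ∫ γ in Ioi 0, betaKernel η β γ := by
  refine (StrictConcaveOn.integral (by simp) (convex_Ioi 0) ?_
    fun β hβ => integrableOn_exp_neg_mul_div_add hη hβ).congr
    fun β hβ => (integral_betaKernel_eq hη hβ).symm
  filter_upwards [ae_restrict_mem measurableSet_Ioi] with t (ht : 0 < t)
  exact (strictConcaveOn_const_mul_div_add (by positivity) (by positivity)).subset
    (Ioi_subset_Ioi (by simp; positivity)) (convex_Ioi 0)

lemma betaKernel_chord_gap_eq (η m x y a b γ : ℝ) :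
    betaKernel η m γ - (a * betaKernel η x γ + b * betaKernel η y γ) =
      exp (-m * γ / η) / (1 + γ) *
        (m - a * x * exp ((m - x) / η * γ) - b * y * exp ((m - y) / η * γ)) := by
  have hx : exp (-m * γ / η) * exp ((m - x) / η * γ) = exp (-x * γ / η) := by
    rw [← exp_add]; ring_nf
  have hy : exp (-m * γ / η) * exp ((m - y) / η * γ) = exp (-y * γ / η) := by
    rw [← exp_add]; ring_nf
  simp only [betaKernel, ← hx, ← hy]
  ring

lemma concaveOn_sub_mul_exp_sub_mul_exp {A B : ℝ} (hA : 0 ≤ A) (hB : 0 ≤ B) (m c d : ℝ) :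
    ConcaveOn ℝ univ fun γ => m - A * exp (c * γ) - B * exp (d * γ) := by
  have hexp : ∀ c : ℝ, ConvexOn ℝ univ fun γ => exp (c * γ) := fun c => by
    simpa [Function.comp_def] using convexOn_exp.comp_linearMap (LinearMap.mulLeft ℝ c)
  exact ((concaveOn_const m convex_univ).sub ((hexp c).smul hA)).sub ((hexp d).smul hB)

lemma exists_crossesDownAt_betaKernel_chord_gap {x y a b : ℝ} (hη : 0 < η) (hx : 0 < x)
    (hxy : x < y) (ha : 0 < a) (hb : 0 < b) (hab : a + b = 1)
    (hpos : ∃ γ ∈ Ioi 0,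
      0 < betaKernel η (a * x + b * y) γ - (a * betaKernel η x γ + b * betaKernel η y γ)) :
    ∃ γ₀ ∈ Ioi 0, CrossesDownAt (Ioi 0)
      (fun γ => betaKernel η (a * x + b * y) γ - (a * betaKernel η x γ + b * betaKernel η y γ))
      γ₀ := by
  have hy : 0 < y := hx.trans hxy
  set m := a * x + b * y with hm
  have hm0 : 0 < m := by positivity
  set ψ := fun γ => m - a * x * exp ((m - x) / η * γ) - b * y * exp ((m - y) / η * γ) with hψ
  have hfactor : ∀ γ ∈ Ioi (0 : ℝ), 0 < exp (-m * γ / η) / (1 + γ) := fun γ (hγ : 0 < γ) => by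
    positivity
  have hψ_concave : ConcaveOn ℝ (Ici 0) ψ :=
    (concaveOn_sub_mul_exp_sub_mul_exp (by positivity) (by positivity) _ _ _).subset
      (subset_univ _) (convex_Ici 0)
  have hψ_zero : ψ 0 = 0 := by simp [hψ, hm]
  obtain ⟨γ₁, hγ₁, hψγ₁⟩ : ∃ γ ∈ Ioi 0, 0 < ψ γ := by
    obtain ⟨γ, hγ, hgap⟩ := hpos
    rw [betaKernel_chord_gap_eq] at hgap
    exact ⟨γ, hγ, pos_of_mul_pos_right hgap (hfactor γ hγ).le⟩
  have hmx : 0 < m - x := by rw [hm]; nlinarith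
  have hΓ : 0 < η * m / (a * x * (m - x)) := by positivity
  have hψΓ : ψ (η * m / (a * x * (m - x))) < 0 := by
    have harg : (m - x) / η * (η * m / (a * x * (m - x))) = m / (a * x) := by
      field_simp
    have hexp : m + a * x ≤ a * x * exp (m / (a * x)) := by
      have := mul_le_mul_of_nonneg_left (add_one_le_exp (m / (a * x))) (by positivity : 0 ≤ a * x)
      rwa [mul_add, mul_div_cancel₀ _ (by positivity), mul_one] at this
    have : 0 < b * y * exp ((m - y) / η * (η * m / (a * x * (m - x)))) := by positivity
    simp only [hψ, harg]
    nlinarith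
  obtain ⟨γ₀, hγ₀, hle, hge⟩ :=
    hψ_concave.exists_crossesDownAt (by fun_prop) hψ_zero hγ₁ hψγ₁ hΓ hψΓ
  refine ⟨γ₀, hγ₀, fun γ hγ hγγ₀ => ?_, fun γ hγ hγ₀γ => ?_⟩
  · simp only [betaKernel_chord_gap_eq]
    exact mul_nonneg (hfactor γ hγ).le (hle γ hγ hγγ₀)
  · simp only [betaKernel_chord_gap_eq]
    exact mul_nonpos_of_nonneg_of_nonpos (hfactor γ hγ).le (hge γ hγ hγ₀γ)

theorem stmt_11_general (η : ℝ) (hη : 0 < η) (w : ℝ → ℝ)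
    (hw : AntitoneOn w (Set.Ioi 0))
    (hwpos : ∀ γ ∈ Set.Ioi (0 : ℝ), 0 < w γ)
    (hint : IntegrableOn (fun γ => w γ / (1 + γ)) (Set.Ioi 0)) :
    StrictConcaveOn ℝ (Set.Ioi 0)
      (fun β : ℝ => β * ∫ γ in Set.Ioi (0 : ℝ), w γ * Real.exp (-β * γ / η) / (1 + γ)) := by
  refine ((strictConcaveOn_integral_betaKernel hη).setIntegral_mul_of_antitoneOn measurableSet_Ioi
    (fun β hβ => integrableOn_betaKernel hη hβ) (fun β hβ => integrableOn_mul_betaKernel hη hβ hint)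
    hw hwpos fun x hx y _ hxy a b ha hb hab =>
      exists_crossesDownAt_betaKernel_chord_gap hη hx hxy ha hb hab).congr fun β _ => ?_
  simp only [← integral_const_mul, betaKernel]
  exact integral_congr_ae (ae_of_all _ fun γ => by ring)

theorem stmt_11 (η : ℝ) (hη : 0 < η) (w : ℝ → ℝ)
    (hw : AntitoneOn w (Set.Ioi 0))
    (hwpos : ∀ γ ∈ Set.Ioi (0 : ℝ), 0 < w γ)
    (hwle : ∀ γ ∈ Set.Ioi (0 : ℝ), w γ ≤ 1)
    (hint : IntegrableOn (fun γ => w γ / (1 + γ)) (Set.Ioi 0)) :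
    StrictConcaveOn ℝ (Set.Ioi 0)
      (fun β : ℝ => β * ∫ γ in Set.Ioi (0 : ℝ), w γ * Real.exp (-β * γ / η) / (1 + γ)) :=
  stmt_11_general η hη w hw hwpos hint
end

section
/- Fix η > 0 and define u : {(x,y) ∈ ℝ² : x ≥ 0, y ≥ 0, x + y > 0} → ℝ by u(x,y) = (x+y) ∫₀^∞ e^{-(x+y)γ/η}/(1+γ) dγ. Then the mixed second partial derivative ∂²u/∂x∂y exists and is strictly negative at every point with x + y > 0. -/
/-!
Substituting `s = βγ` turns `β ∫₀^∞ e^{-βγ/η}/(1+γ) dγ` into `∫₀^∞ e^{-s/η} β/(β+s) ds`, so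
`u(x,y) = g(x+y)` with `g = C - K₁`, where `Kₙ(β) = ∫₀^∞ e^{-s/η} s/(β+s)ⁿ ds`. Differentiating
under the integral sign gives `Kₙ' = -n Kₙ₊₁`, hence `∂²u/∂x∂y = g''(x+y) = -2 K₃(x+y) < 0`.
-/

open MeasureTheory Real Set Filter Topology

noncomputable def weightedStieltjes (w : ℝ → ℝ) (n : ℕ) (β : ℝ) : ℝ :=
  ∫ s in Ioi 0, w s * (s / (β + s) ^ n)

lemma div_add_pow_succ_le {β s : ℝ} (hβ : 0 < β) (hs : 0 ≤ s) (n : ℕ) :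
    s / (β + s) ^ (n + 1) ≤ (β ^ n)⁻¹ := by
  have hβs : 0 < β + s := by linarith
  calc s / (β + s) ^ (n + 1) ≤ (β + s) / (β + s) ^ (n + 1) := by gcongr; linarith
    _ = ((β + s) ^ n)⁻¹ := by field_simp; ring
    _ ≤ (β ^ n)⁻¹ := by gcongr; linarith

lemma hasDerivAt_div_add_pow {s β : ℝ} (h : β + s ≠ 0) (n : ℕ) :
    HasDerivAt (fun b => s / (b + s) ^ (n + 1)) (-(n + 1) * (s / (β + s) ^ (n + 2))) β := by
  have hpow := ((hasDerivAt_id β).add_const s).fun_pow (n + 1)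
  refine ((hasDerivAt_const β s).fun_div hpow (pow_ne_zero _ h)).congr_deriv ?_
  simp only [id, add_tsub_cancel_right]
  field_simp
  push_cast
  ring

section

variable {w : ℝ → ℝ}

lemma integrableOn_mul_div_add_pow (hw : IntegrableOn w (Ioi 0)) {β : ℝ} (hβ : 0 < β) (n : ℕ) :
    IntegrableOn (fun s => w s * (s / (β + s) ^ (n + 1))) (Ioi 0) := by
  refine hw.mul_bdd (c := (β ^ n)⁻¹) (by fun_prop : Measurable _).aestronglyMeasurable ?_
  filter_upwards [ae_restrict_mem measurableSet_Ioi] with s (hs : 0 < s)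
  rw [Real.norm_of_nonneg (by positivity)]
  exact div_add_pow_succ_le hβ hs.le n

theorem hasDerivAt_weightedStieltjes (hw : IntegrableOn w (Ioi 0)) {β : ℝ} (hβ : 0 < β)
    (n : ℕ) :
    HasDerivAt (weightedStieltjes w (n + 1)) (-(n + 1) * weightedStieltjes w (n + 2) β) β := by
  have h_bound : ∀ᵐ s ∂volume.restrict (Ioi 0), ∀ b ∈ Ioi (β / 2),
      ‖w s * (-(n + 1) * (s / (b + s) ^ (n + 2)))‖ ≤ ‖w s‖ * ((n + 1) * ((β / 2) ^ (n + 1))⁻¹) := by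
    filter_upwards [ae_restrict_mem measurableSet_Ioi] with s (hs : 0 < s) b (hb : β / 2 < b)
    have hb0 : 0 < b := (half_pos hβ).trans hb
    rw [norm_mul, norm_mul, norm_neg, Real.norm_of_nonneg (by positivity : (0 : ℝ) ≤ n + 1),
      Real.norm_of_nonneg (by positivity : 0 ≤ s / (b + s) ^ (n + 2))]
    gcongr
    calc s / (b + s) ^ (n + 1 + 1) ≤ (b ^ (n + 1))⁻¹ := div_add_pow_succ_le hb0 hs.le (n + 1)
      _ ≤ ((β / 2) ^ (n + 1))⁻¹ := by gcongr
  have h_diff : ∀ᵐ s ∂volume.restrict (Ioi 0), ∀ b ∈ Ioi (β / 2),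
      HasDerivAt (fun b => w s * (s / (b + s) ^ (n + 1)))
        (w s * (-(n + 1) * (s / (b + s) ^ (n + 2)))) b := by
    filter_upwards [ae_restrict_mem measurableSet_Ioi] with s (hs : 0 < s) b (hb : β / 2 < b)
    have hb0 : 0 < b := (half_pos hβ).trans hb
    exact (hasDerivAt_div_add_pow (by positivity) n).const_mul (w s)
  have h := (hasDerivAt_integral_of_dominated_loc_of_deriv_le
    (Ioi_mem_nhds (half_lt_self hβ))
    (F := fun b s => w s * (s / (b + s) ^ (n + 1)))
    (Eventually.of_forall fun b =>
      hw.aestronglyMeasurable.mul (by fun_prop : Measurable _).aestronglyMeasurable)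
    (integrableOn_mul_div_add_pow hw hβ n)
    (hw.aestronglyMeasurable.mul (by fun_prop : Measurable _).aestronglyMeasurable) h_bound
    (hw.norm.mul_const _) h_diff).2
  rw [funext fun s => mul_left_comm _ (-(n + 1 : ℝ)) _, integral_const_mul] at h
  exact h

theorem weightedStieltjes_pos (hw : IntegrableOn w (Ioi 0)) (hw_pos : ∀ s > 0, 0 < w s)
    {β : ℝ} (hβ : 0 < β) (n : ℕ) : 0 < weightedStieltjes w (n + 1) β := by
  have hf_pos : ∀ s ∈ Ioi (0 : ℝ), 0 < w s * (s / (β + s) ^ (n + 1)) := fun s (hs : 0 < s) => by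
    have := hw_pos s hs
    positivity
  rw [weightedStieltjes, setIntegral_pos_iff_support_of_nonneg_ae
    ((ae_restrict_mem measurableSet_Ioi).mono fun s hs => (hf_pos s hs).le)
    (integrableOn_mul_div_add_pow hw hβ n),
    inter_eq_right.mpr fun s hs => Function.mem_support.mpr (hf_pos s hs).ne', Real.volume_Ioi]
  exact ENNReal.zero_lt_top

theorem mul_integral_comp_mul_div_one_add (hw : IntegrableOn w (Ioi 0)) {β : ℝ} (hβ : 0 < β) :
    β * ∫ γ in Ioi 0, w (β * γ) / (1 + γ) = (∫ s in Ioi 0, w s) - weightedStieltjes w 1 β := by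
  have h := integral_comp_mul_left_Ioi' (fun s => w s / (1 + s / β)) 0 hβ
  simp only [mul_zero, smul_eq_mul, mul_div_cancel_left₀ _ hβ.ne'] at h
  have hK : IntegrableOn (fun s => w s * (s / (β + s) ^ 1)) (Ioi 0) :=
    integrableOn_mul_div_add_pow hw hβ 0
  rw [h, weightedStieltjes, ← integral_sub hw hK]
  refine setIntegral_congr_fun measurableSet_Ioi fun s (hs : 0 < s) => ?_
  field_simp
  ring

end

lemma integrableOn_exp_neg_div {η : ℝ} (hη : 0 < η) :
    IntegrableOn (fun s => exp (-s / η)) (Ioi 0) := by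
  simpa [neg_div, div_eq_inv_mul] using exp_neg_integrableOn_Ioi 0 (inv_pos.mpr hη)

theorem stmt_12 (η : ℝ) (hη : 0 < η) (u : ℝ → ℝ → ℝ)
    (hu : ∀ x y : ℝ, u x y =
      (x + y) * ∫ γ in Set.Ioi (0 : ℝ), Real.exp (-(x + y) * γ / η) / (1 + γ)) :
    ∀ x y : ℝ, 0 ≤ x → 0 ≤ y → 0 < x + y →
      (∀ x' : ℝ, 0 ≤ x' → 0 < x' + y → DifferentiableAt ℝ (fun y' => u x' y') y) ∧
      ∃ d : ℝ, d < 0 ∧ HasDerivAt (fun x' => deriv (fun y' => u x' y') y) d x := by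
  intro x y _ _ hxy
  set w : ℝ → ℝ := fun s => exp (-s / η)
  have hw : IntegrableOn w (Ioi 0) := integrableOn_exp_neg_div hη
  have hu_eq {x' y' : ℝ} (h : 0 < x' + y') :
      u x' y' = (∫ s in Ioi 0, w s) - weightedStieltjes w 1 (x' + y') := by
    simp only [hu, neg_mul, ← mul_integral_comp_mul_div_one_add hw h, w]
  have hu_y {x' : ℝ} (h : 0 < x' + y) :
      HasDerivAt (fun y' => u x' y') (weightedStieltjes w 2 (x' + y)) y := by
    have hK := ((hasDerivAt_weightedStieltjes hw h 0).comp_const_add x' y).const_sub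
      (∫ s in Ioi 0, w s)
    refine (by simpa using hK : HasDerivAt _ _ y).congr_of_eventuallyEq ?_
    filter_upwards [((continuous_const_add x').tendsto y).eventually (lt_mem_nhds h)]
      with y' hy' using hu_eq hy'
  refine ⟨fun x' _ h => (hu_y h).differentiableAt, -(2 * weightedStieltjes w 3 (x + y)),
    neg_lt_zero.mpr (mul_pos two_pos (weightedStieltjes_pos hw (fun s _ => exp_pos _) hxy 2)), ?_⟩
  have hK : HasDerivAt (fun x' => weightedStieltjes w 2 (x' + y))
      (-(2 * weightedStieltjes w 3 (x + y))) x := by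
    simpa [one_add_one_eq_two] using (hasDerivAt_weightedStieltjes hw hxy 1).comp_add_const x y
  refine hK.congr_of_eventuallyEq ?_
  filter_upwards [((continuous_add_const y).tendsto x).eventually (lt_mem_nhds hxy)]
    with x' hx' using (hu_y hx').deriv
end
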